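/- arXiv:2201.03631 — 3 statements merged into one kernel-verified Lean document; each statement's English description precedes it below -/
import Mathlib

section
/- For any ultraimaginaries a_E, b_F, c_G, c'_G, the following are equivalent: (1) for every cardinal λ, there is an automorphism of 𝕄 fixing every element of dclᵘ_λ(a_E) ∩ dclᵘ_λ(b_F) and sending c_G to c'_G; (2) there is σ in the subgroup ⟨Aut(𝕄/a_E) ∪ Aut(𝕄/b_F)⟩ generated by Aut(𝕄/a_E) and Aut(𝕄/b_F) with σ·c_G = c'_G; (3) there is a finite sequence (aⁱbⁱcⁱ)_{i ≤ n} with a⁰ = a, b⁰ = b, c⁰ = c, cⁿ = c', such that for each i < n: if i is even then aⁱ = aⁱ⁺¹ and bⁱ_F cⁱ_G ≡_{aⁱ_E} bⁱ⁺¹_F cⁱ⁺¹_G, and if i is odd then bⁱ = bⁱ⁺¹ and aⁱ_E cⁱ_G ≡_{bⁱ_F} aⁱ⁺¹_E cⁱ⁺¹_G. -/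
open FirstOrder Cardinal

universe u v w

namespace BddUltra

variable (L : FirstOrder.Language.{u, u}) (M : Type u) [L.Structure M]

/-- The automorphism group of `M` (composition as multiplication). -/
instance : Group (M ≃[L] M) where
  mul f g := f.comp g
  one := Language.Equiv.refl L M
  inv := Language.Equiv.symm
  mul_assoc f g h := by ext x; rfl
  one_mul f := by ext x; rfl
  mul_one f := by ext x; rfl
  inv_mul_cancel f := by ext x; exact f.toEquiv.symm_apply_apply x

/-- The cardinality `|T|` of the theory: the cardinality of the language plus `ℵ₀`. -/
def cardT : Cardinal.{u} := L.card + ℵ₀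

/-- Two tuples realize the same complete type over `∅`. -/
def SameType {α : Type v} (a b : α → M) : Prop :=
  ∀ φ : L.Formula α, φ.Realize a ↔ φ.Realize b

/-- Two tuples realize the same complete type over the set `A ⊆ M` of parameters. -/
def SameTypeOver (A : Set M) {α : Type v} (a b : α → M) : Prop :=
  ∀ φ : L.Formula (↥A ⊕ α),
    φ.Realize (Sum.elim (Subtype.val : ↥A → M) a) ↔
      φ.Realize (Sum.elim (Subtype.val : ↥A → M) b)

theorem SameType.comp {α : Type v} {γ : Type w} {a b : α → M} (h : SameType L M a b)
    (g : γ → α) : SameType L M (a ∘ g) (b ∘ g) := by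
  intro φ
  have := h (φ.relabel g)
  rwa [Language.Formula.realize_relabel, Language.Formula.realize_relabel] at this

/-- An invariant equivalence relation of arity `α` on `α`-tuples from `M`. -/
structure IER (α : Type u) : Type u where
  rel : (α → M) → (α → M) → Prop
  equiv : Equivalence rel
  invariant : ∀ a b c d : α → M,
    SameType L M (Sum.elim a b) (Sum.elim c d) → (rel a b ↔ rel c d)

def IER.setoid {α : Type u} (E : IER L M α) : Setoid (α → M) := ⟨E.rel, E.equiv⟩

/-- The pair (juxtaposition) of two invariant equivalence relations. -/
def IER.prod {α β : Type u} (E : IER L M α) (F : IER L M β) : IER L M (α ⊕ β) where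
  rel x y := E.rel (x ∘ Sum.inl) (y ∘ Sum.inl) ∧ F.rel (x ∘ Sum.inr) (y ∘ Sum.inr)
  equiv := ⟨fun _ => ⟨E.equiv.refl _, F.equiv.refl _⟩,
    fun h => ⟨E.equiv.symm h.1, F.equiv.symm h.2⟩,
    fun h h' => ⟨E.equiv.trans h.1 h'.1, F.equiv.trans h.2 h'.2⟩⟩
  invariant := by
    intro a b c d h
    have e1 : ∀ (x : α ⊕ β → M) (y : α ⊕ β → M),
        (Sum.elim x y) ∘ (Sum.map Sum.inl Sum.inl : α ⊕ α → (α ⊕ β) ⊕ (α ⊕ β))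
          = Sum.elim (x ∘ Sum.inl) (y ∘ Sum.inl) := by
      intro x y; funext i; cases i <;> rfl
    have e2 : ∀ (x : α ⊕ β → M) (y : α ⊕ β → M),
        (Sum.elim x y) ∘ (Sum.map Sum.inr Sum.inr : β ⊕ β → (α ⊕ β) ⊕ (α ⊕ β))
          = Sum.elim (x ∘ Sum.inr) (y ∘ Sum.inr) := by
      intro x y; funext i; cases i <;> rfl
    have h1 := h.comp (L := L) (M := M) (Sum.map Sum.inl Sum.inl)
    have h2 := h.comp (L := L) (M := M) (Sum.map Sum.inr Sum.inr)
    rw [e1, e1] at h1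
    rw [e2, e2] at h2
    exact and_congr (E.invariant _ _ _ _ h1) (F.invariant _ _ _ _ h2)

/-- The set of automorphisms fixing the ultraimaginary `a_E`. -/
def autU {α : Type u} (E : IER L M α) (a : α → M) : Set (M ≃[L] M) :=
  {σ | E.rel a (⇑σ ∘ a)}

/-- The set of automorphisms fixing the set `A` pointwise. -/
def autSet (A : Set M) : Set (M ≃[L] M) := {σ | ∀ x ∈ A, σ x = x}

/-- The set of automorphisms fixing the set `A` and the tuple `u` pointwise. -/
def autSetTup (A : Set M) {γ : Type v} (u : γ → M) : Set (M ≃[L] M) :=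
  {σ | (∀ x ∈ A, σ x = x) ∧ ∀ i, σ (u i) = u i}

/-- The ultraimaginary `b_F` is bounded over a parameter set whose pointwise
stabilizer is `X`: the `X`-orbit of `b` meets fewer than `κ` classes of `F`. -/
def BddU (κ : Cardinal.{u}) (X : Set (M ≃[L] M)) {β : Type u} (F : IER L M β)
    (b : β → M) : Prop :=
  ∃ S : Set (β → M), #S < κ ∧ ∀ σ ∈ X, ∃ s ∈ S, F.rel (⇑σ ∘ b) s

/-- The cardinality of the orbit of the ultraimaginary `b_F` under the set `X`
of automorphisms. -/
def orbitCard (X : Set (M ≃[L] M)) {β : Type u} (F : IER L M β) (b : β → M) :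
    Cardinal.{u} :=
  #(Set.range fun σ : X => Quotient.mk F.setoid (⇑σ.1 ∘ b))

/-- `b ⫝ᵇᵘ_A c`, expressed in terms of the pointwise stabilizers `XA`, `XAb`, `XAc` of
`A`, `Ab` and `Ac`: an ultraimaginary is bounded over `Ab` and over `Ac` iff it is
bounded over `A`. -/
def IndepBU (κ : Cardinal.{u}) (XA XAb XAc : Set (M ≃[L] M)) : Prop :=
  ∀ (δ : Type u) (H : IER L M δ) (d : δ → M),
    (BddU L M κ XAb H d ∧ BddU L M κ XAc H d) ↔ BddU L M κ XA H d

/-- The set of automorphisms fixing an elementary substructure pointwise. -/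
def autES (N : L.ElementarySubstructure M) : Set (M ≃[L] M) :=
  autSet L M (N : Set M)

/-- `Autf(𝕄/x)` where `X = Aut(𝕄/x)`: the subgroup generated by all pointwise
stabilizers of small models that are contained in `X`. -/
def autfGen (κ : Cardinal.{u}) (X : Set (M ≃[L] M)) : Subgroup (M ≃[L] M) :=
  Subgroup.closure {σ | ∃ N : L.ElementarySubstructure M,
    #(N : Set M) < κ ∧ autES L M N ⊆ X ∧ σ ∈ autES L M N}

/-- The group of Lascar strong automorphisms over the set `A ⊆ M`: generated by the
pointwise stabilizers of small models containing `A`. -/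
def lascarGrp (κ : Cardinal.{u}) (A : Set M) : Subgroup (M ≃[L] M) :=
  Subgroup.closure {σ | ∃ N : L.ElementarySubstructure M,
    #(N : Set M) < κ ∧ A ⊆ (N : Set M) ∧ σ ∈ autES L M N}

/-- κ-saturation: every finitely realizable set of formulas over a parameter tuple of
arity `< κ`, in `< κ` many variables, is realized. -/
def Saturated (κ : Cardinal.{u}) : Prop :=
  ∀ (α β : Type u), #α < κ → #β < κ → ∀ (a : α → M) (p : Set (L.Formula (α ⊕ β))),
    (∀ s : Finset (L.Formula (α ⊕ β)), ↑s ⊆ p →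
      ∃ b : β → M, ∀ φ ∈ s, φ.Realize (Sum.elim a b)) →
    ∃ b : β → M, ∀ φ ∈ p, φ.Realize (Sum.elim a b)

/-- Strong κ-homogeneity: tuples of arity `< κ` with the same type over `∅` are
conjugate under an automorphism. -/
def Homog (κ : Cardinal.{u}) : Prop :=
  ∀ (α : Type u) (a b : α → M), #α < κ → SameType L M a b →
    ∃ σ : M ≃[L] M, ∀ i, σ (a i) = b i

/-- `M` is a monster model with bound `κbar`: `κbar` is a sufficiently large
(uncountable, regular, strong limit, above `|T|`) cardinal, and `M` is
`κbar`-saturated and strongly `κbar`-homogeneous. -/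
structure Monster (κbar : Cardinal.{u}) : Prop where
  aleph0_lt : ℵ₀ < κbar
  isRegular : κbar.IsRegular
  strongLimit : ∀ ρ : Cardinal.{u}, ρ < κbar → 2 ^ ρ < κbar
  lang_lt : L.card < κbar
  saturated : Saturated L M κbar
  homog : Homog L M κbar

/-- A hyperimaginary: the class of a countable tuple under a countably
type-definable (over `∅`) equivalence relation. -/
structure Hyp : Type u where
  rep : ℕ → M
  fmls : Set (L.Formula (ℕ ⊕ ℕ))
  countable : fmls.Countable
  equiv : Equivalence fun a b : ℕ → M => ∀ φ ∈ fmls, φ.Realize (Sum.elim a b)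

/-- The automorphisms fixing each hyperimaginary in the set `A`. -/
def autHyp (A : Set (Hyp L M)) : Set (M ≃[L] M) :=
  {σ | ∀ h ∈ A, ∀ φ ∈ h.fmls, φ.Realize (Sum.elim h.rep (⇑σ ∘ h.rep))}

/-- The automorphisms fixing each hyperimaginary in `A` and the tuple `u` pointwise. -/
def autHypTup (A : Set (Hyp L M)) {γ : Type v} (u : γ → M) : Set (M ≃[L] M) :=
  {σ | σ ∈ autHyp L M A ∧ ∀ i, σ (u i) = u i}

/-- Flattening of a finite subsequence of a sequence of tuples into a single tuple. -/
def flatten {ι : Type v} {β : Type w} (f : ι → β → M) {n : ℕ} (s : Fin n → ι) :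
    Fin n × β → M := fun p => f (s p.1) p.2

/-- A sequence of tuples is `A`-indiscernible (`A ⊆ M` a set of real parameters). -/
def IndiscOver (A : Set M) {ι : Type v} [Preorder ι] {β : Type w} (f : ι → β → M) : Prop :=
  ∀ (n : ℕ) (s t : Fin n → ι), StrictMono s → StrictMono t →
    SameTypeOver L M A (flatten M f s) (flatten M f t)

/-- Two sequences have the same Ehrenfeucht–Mostowski type over `A ⊆ M`. -/
def SameEMOver (A : Set M) {ι : Type v} [Preorder ι] {ι' : Type w} [Preorder ι']
    {β : Type u} (f : ι → β → M) (g : ι' → β → M) : Prop :=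
  ∀ (n : ℕ) (s : Fin n → ι) (t : Fin n → ι'), StrictMono s → StrictMono t →
    SameTypeOver L M A (flatten M f s) (flatten M g t)

/-- A sequence of tuples is `A`-indiscernible, for `A` a set of hyperimaginaries:
any two increasing tuples from the sequence are conjugate under `Aut(𝕄/A)`. -/
def IndiscOverHyp (A : Set (Hyp L M)) {ι : Type v} [Preorder ι] {β : Type w}
    (f : ι → β → M) : Prop :=
  ∀ (n : ℕ) (s t : Fin n → ι), StrictMono s → StrictMono t →
    ∃ σ ∈ autHyp L M A, ∀ (i : Fin n) (x : β), σ (f (s i) x) = f (t i) x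

/-- Two sequences have the same EM-type over the set `A` of hyperimaginaries. -/
def SameEMOverHyp (A : Set (Hyp L M)) {ι : Type v} [Preorder ι] {ι' : Type w} [Preorder ι']
    {β : Type u} (f : ι → β → M) (g : ι' → β → M) : Prop :=
  ∀ (n : ℕ) (s : Fin n → ι) (t : Fin n → ι'), StrictMono s → StrictMono t →
    ∃ σ ∈ autHyp L M A, ∀ (i : Fin n) (x : β), σ (f (s i) x) = g (t i) x

/-- A sequence of `β`-tuples from `N`, indexed by an arbitrary small linear order. -/
structure Seq (N : Type u) (β : Type u) : Type (u + 1) where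
  idx : Type u
  [ord : LinearOrder idx]
  val : idx → β → N

attribute [instance] Seq.ord

/-- Concatenation `I + J` of sequences. -/
def Seq.concat {N β : Type u} (I J : Seq N β) : Seq N β where
  idx := I.idx ⊕ₗ J.idx
  val := fun x => Sum.elim I.val J.val (ofLex x)

/-- The sequence `I` flattened into a single tuple. -/
def Seq.flat {N β : Type u} (I : Seq N β) : I.idx × β → N := fun p => I.val p.1 p.2

/-- The image `σ · I` of a sequence under an automorphism. -/
def Seq.map {β : Type u} (σ : M ≃[L] M) (I : Seq M β) : Seq M β where
  idx := I.idx
  ord := I.ord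
  val := fun i x => σ (I.val i x)

/-- The sequence `(b_i)_{i < ω}` packaged as a `Seq`. -/
def Seq.ofNat {N β : Type u} (b : ℕ → β → N) : Seq N β where
  idx := ULift.{u} ℕ
  val := fun n => b n.down

/-- `I ∼_A J`: both sequences are infinite and `I + J` or `J + I` is `A`-indiscernible. -/
def SimSeq (A : Set M) {β : Type u} (I J : Seq M β) : Prop :=
  Infinite I.idx ∧ Infinite J.idx ∧
    (IndiscOver L M A (I.concat J).val ∨ IndiscOver L M A (J.concat I).val)

/-- `I ≈_A J`: the transitive closure of `∼_A`. -/
def ApproxSeq (A : Set M) {β : Type u} : Seq M β → Seq M β → Prop :=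
  Relation.TransGen (SimSeq L M A)

/-- `I ∼_A J` for `A` a set of hyperimaginaries. -/
def SimSeqHyp (A : Set (Hyp L M)) {β : Type u} (I J : Seq M β) : Prop :=
  Infinite I.idx ∧ Infinite J.idx ∧
    (IndiscOverHyp L M A (I.concat J).val ∨ IndiscOverHyp L M A (J.concat I).val)

/-- `I ≈_A J` for `A` a set of hyperimaginaries. -/
def ApproxSeqHyp (A : Set (Hyp L M)) {β : Type u} : Seq M β → Seq M β → Prop :=
  Relation.TransGen (SimSeqHyp L M A)

/-- `u ⫝ᵇᵘ_A v` for tuples `u`, `v` over a set `A ⊆ M` of real parameters. -/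
def IndepBUReal (κ : Cardinal.{u}) (A : Set M) {γ : Type v} {δ : Type w}
    (x : γ → M) (y : δ → M) : Prop :=
  IndepBU L M κ (autSet L M A) (autSetTup L M A x) (autSetTup L M A y)

/-- `u ⫝ᵇᵘ_A v` for tuples `u`, `v` over a set `A` of hyperimaginaries. -/
def IndepBUHyp (κ : Cardinal.{u}) (A : Set (Hyp L M)) {γ : Type v} {δ : Type w}
    (x : γ → M) (y : δ → M) : Prop :=
  IndepBU L M κ (autHyp L M A) (autHypTup L M A x) (autHypTup L M A y)

/-- A total `⫝ᵇᵘ`-Morley sequence over the set `A ⊆ M`. -/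
def TotalMorleyReal (κ : Cardinal.{u}) (A : Set M) {β : Type u} (b : ℕ → β → M) : Prop :=
  IndiscOver L M A b ∧
    ∀ I J : Seq M β, #I.idx < κ → #J.idx < κ →
      SameEMOver L M A ((I.concat J).val) b →
        IndepBUReal L M κ A I.flat J.flat

/-- A total `⫝ᵇᵘ`-Morley sequence over the set `A` of hyperimaginaries. -/
def TotalMorleyHyp (κ : Cardinal.{u}) (A : Set (Hyp L M)) {β : Type u}
    (b : ℕ → β → M) : Prop :=
  IndiscOverHyp L M A b ∧
    ∀ I J : Seq M β, #I.idx < κ → #J.idx < κ →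
      SameEMOverHyp L M A ((I.concat J).val) b →
        IndepBUHyp L M κ A I.flat J.flat

/-- `tp(b/Ac)` divides over `A`. -/
def Divides (A : Set M) {β : Type v} {γ : Type w} (b : β → M) (c : γ → M) : Prop :=
  ∃ ci : ℕ → γ → M, ci 0 = c ∧ IndiscOver L M A ci ∧
    ¬∃ b' : β → M, ∀ (i : ℕ) (φ : L.Formula (↥A ⊕ (β ⊕ γ))),
      φ.Realize (Sum.elim (Subtype.val : ↥A → M) (Sum.elim b c)) →
        φ.Realize (Sum.elim (Subtype.val : ↥A → M) (Sum.elim b' (ci i)))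

/-- The partition relation `λ → (β)^{<ω}_γ`. -/
def ArrowRel (lam : Cardinal.{u}) (ot : Ordinal.{u}) (c : Cardinal.{u}) : Prop :=
  ∀ f : Finset lam.ord.ToType → c.ord.ToType,
    ∃ X : Set lam.ord.ToType, Nonempty (↥X ≃o ot.ToType) ∧
      ∀ s t : Finset lam.ord.ToType, ↑s ⊆ X → ↑t ⊆ X → s.card = t.card → f s = f t

/-- The Lascar strong automorphism group over a set `A` of hyperimaginaries:
generated by pointwise stabilizers of small models fixing every element of `A`. -/
def lascarHypGrp (κ : Cardinal.{u}) (A : Set (Hyp L M)) : Subgroup (M ≃[L] M) :=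
  Subgroup.closure {σ | ∃ N : L.ElementarySubstructure M,
    #(N : Set M) < κ ∧ autES L M N ⊆ autHyp L M A ∧ σ ∈ autES L M N}

/-- `b_F ⫝ᵇᵘ_{a_E} c_G` for ultraimaginaries. -/
def IndepU (κ : Cardinal.{u}) {α β γ : Type u} (E : IER L M α) (a : α → M)
    (F : IER L M β) (b : β → M) (G : IER L M γ) (c : γ → M) : Prop :=
  IndepBU L M κ (autU L M E a) (autU L M E a ∩ autU L M F b)
    (autU L M E a ∩ autU L M G c)
/-!
A crab walk from `(a, b, c)` alternately moves `(b, c)` by an automorphism fixing the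
first coordinate `a_E` and `(a, c)` by one fixing the second coordinate `b_F`. The subgroup
`⟨Aut(𝕄/a_E) ∪ Aut(𝕄/b_F)⟩` moves `(a, b, c)` exactly along crab walks: a generator is a
walk of two steps, and conversely, if the walk so far is realized by `τ`, its next step is
realized by a `τ`-conjugate of an element of `Aut(𝕄/a_E) ∪ Aut(𝕄/b_F)`. This gives
(2) ⇔ (3). Crab-walk connectedness is an automorphism-invariant equivalence relation
on triples, hence, by homogeneity, an invariant equivalence relation `H` of small arity. The
class of `(a, b, c)` under `H` is definable over `a_E` and over `b_F`, so an automorphism as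
in (1) fixes it, i.e. it walks `(a, b, c)` to its image: this gives (1) ⇒ (2).
-/

section Action

variable {L : FirstOrder.Language.{u, u}} {M : Type u} [L.Structure M]

/-- Automorphisms act on `M`, hence coordinatewise on tuples (`σ • x = ⇑σ ∘ x`) and on
pairs and triples of tuples. -/
instance : MulAction (M ≃[L] M) M where
  smul σ x := σ x
  one_smul _ := rfl
  mul_smul _ _ _ := rfl

def relStabilizer {Γ X : Type*} [Group Γ] [MulAction Γ X] (r : X → X → Prop)
    (hr : Equivalence r) (hsmul : ∀ (g : Γ) {x y : X}, r x y → r (g • x) (g • y)) (x : X) :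
    Subgroup Γ where
  carrier := {g | r x (g • x)}
  one_mem' := by
    change r x ((1 : Γ) • x)
    rw [one_smul]
    exact hr.refl x
  mul_mem' {g h} hg hh := hr.trans hg (by simpa only [mul_smul] using hsmul g hh)
  inv_mem' {g} hg := hr.symm (by simpa only [inv_smul_smul] using hsmul g⁻¹ hg)

namespace IER

variable {ι : Type u} (E : IER L M ι)

theorem rel_smul_iff (σ : M ≃[L] M) {x y : ι → M} : E.rel (σ • x) (σ • y) ↔ E.rel x y := by
  refine E.invariant _ _ _ _ fun φ => ?_
  change φ.Realize (Sum.elim (⇑σ ∘ x) (⇑σ ∘ y)) ↔ _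
  rw [← Sum.comp_elim]
  exact Language.StrongHomClass.realize_formula σ φ

theorem rel_inv_smul {σ : M ≃[L] M} {x y : ι → M} (h : E.rel (σ • x) y) :
    E.rel (σ⁻¹ • y) x := by
  simpa only [inv_smul_smul] using E.equiv.symm ((E.rel_smul_iff σ⁻¹).2 h)

/-- `Aut(𝕄/x_E)` as a subgroup. -/
def stabilizer (x : ι → M) : Subgroup (M ≃[L] M) :=
  relStabilizer E.rel E.equiv (fun σ _ _ => (E.rel_smul_iff σ).2) x

/-- An automorphism-invariant equivalence relation is invariant in the sense of `IER`
as soon as `𝕄` is homogeneous for pairs of `ι`-tuples. -/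
def ofSmul (r : (ι → M) → (ι → M) → Prop) (hr : Equivalence r)
    (hsmul : ∀ (σ : M ≃[L] M) {x y : ι → M}, r x y → r (σ • x) (σ • y))
    (hom : ∀ u v : ι ⊕ ι → M, SameType L M u v → ∃ σ : M ≃[L] M, ∀ i, σ (u i) = v i) :
    IER L M ι where
  rel := r
  equiv := hr
  invariant a b c d h := by
    obtain ⟨σ, hσ⟩ := hom _ _ h
    obtain rfl : σ • a = c := funext fun i => hσ (Sum.inl i)
    obtain rfl : σ • b = d := funext fun i => hσ (Sum.inr i)
    exact ⟨hsmul σ, fun h => by simpa only [inv_smul_smul] using hsmul σ⁻¹ h⟩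

end IER

section Conjugation

theorem smul_conj_smul (σ ρ : M ≃[L] M) {ι : Type u} (x : ι → M) :
    (σ * ρ * σ⁻¹) • σ • x = σ • ρ • x := by
  rw [← mul_smul, ← mul_smul, inv_mul_cancel_right]

variable {ι : Type u} (E : IER L M ι)

theorem autU_congr {x y : ι → M} (h : E.rel x y) : autU L M E x = autU L M E y := by
  ext σ
  exact ⟨fun hσ => E.equiv.trans (E.equiv.symm h) (E.equiv.trans hσ ((E.rel_smul_iff σ).2 h)),
    fun hσ => E.equiv.trans h (E.equiv.trans hσ ((E.rel_smul_iff σ).2 (E.equiv.symm h)))⟩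

theorem mem_autU_smul (σ : M ≃[L] M) {ρ : M ≃[L] M} {x : ι → M} :
    ρ ∈ autU L M E (σ • x) ↔ σ⁻¹ * ρ * σ ∈ autU L M E x := by
  change E.rel (σ • x) (ρ • σ • x) ↔ E.rel x ((σ⁻¹ * ρ * σ) • x)
  rw [← E.rel_smul_iff σ⁻¹, inv_smul_smul, mul_smul, mul_smul]

theorem conj_mem_autU_smul (σ : M ≃[L] M) {ρ : M ≃[L] M} {x : ι → M}
    (hρ : ρ ∈ autU L M E x) : σ * ρ * σ⁻¹ ∈ autU L M E (σ • x) := by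
  rwa [mem_autU_smul, show σ⁻¹ * (σ * ρ * σ⁻¹) * σ = ρ by group]

end Conjugation

end Action

section Walks

variable {X : Type*}

def IsAlternatingWalk (r s : X → X → Prop) (n : ℕ) (w : ℕ → X) : Prop :=
  ∀ i < n, (Even i → r (w i) (w (i + 1))) ∧ (¬ Even i → s (w i) (w (i + 1)))

theorem IsAlternatingWalk.reflTransGen {r s : X → X → Prop} {n : ℕ} {w : ℕ → X}
    (hw : IsAlternatingWalk r s n w) : Relation.ReflTransGen (r ⊔ s) (w 0) (w n) := by
  induction n with
  | zero => exact .refl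
  | succ n ih =>
    refine (ih fun i hi => hw i (by omega)).tail ?_
    by_cases hn : Even n
    · exact Or.inl ((hw n n.lt_succ_self).1 hn)
    · exact Or.inr ((hw n n.lt_succ_self).2 hn)

/-- With reflexive `r` and `s`, every step of an `r ⊔ s`-path is padded to an `r`-step
followed by an `s`-step, so the path becomes alternating. -/
theorem reflTransGen_sup_iff_exists_isAlternatingWalk {r s : X → X → Prop}
    (hr : ∀ x, r x x) (hs : ∀ x, s x x) {x y : X} :
    Relation.ReflTransGen (r ⊔ s) x y ↔
      ∃ (n : ℕ) (w : ℕ → X), w 0 = x ∧ w n = y ∧ IsAlternatingWalk r s n w := by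
  refine ⟨fun h => ?_, fun ⟨n, w, hx, hy, hw⟩ => hx ▸ hy ▸ hw.reflTransGen⟩
  induction h using Relation.ReflTransGen.head_induction_on with
  | refl => exact ⟨0, fun _ => y, rfl, rfl, fun i hi => absurd hi (Nat.not_lt_zero i)⟩
  | @head x z hxz _ ih =>
    obtain ⟨n, w, hw0, hwn, hw⟩ := ih
    obtain ⟨m, hxm, hmz⟩ : ∃ m, r x m ∧ s m z := hxz.elim (fun h => ⟨z, h, hs z⟩)
      (fun h => ⟨x, hr x, h⟩)
    refine ⟨n + 2, fun | 0 => x | 1 => m | i + 2 => w i, rfl, hwn, ?_⟩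
    rintro (_ | _ | i) hi
    · exact ⟨fun _ => hxm, fun h => absurd Even.zero h⟩
    · refine ⟨fun h => absurd h Nat.not_even_one, fun _ => ?_⟩
      change s m (w 0)
      rwa [hw0]
    · simpa only [Nat.even_add_one, not_not] using hw i (by omega)

end Walks

section CrabWalk

variable {L : FirstOrder.Language.{u, u}} {M : Type u} [L.Structure M] {α β γ : Type u}
variable (E : IER L M α) (F : IER L M β) (G : IER L M γ)
variable {t t' t'' : (α → M) × (β → M) × (γ → M)}

def TripleRel (t t' : (α → M) × (β → M) × (γ → M)) : Prop :=
  E.rel t.1 t'.1 ∧ F.rel t.2.1 t'.2.1 ∧ G.rel t.2.2 t'.2.2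

def StepFst (t t' : (α → M) × (β → M) × (γ → M)) : Prop :=
  t'.1 = t.1 ∧ ∃ σ ∈ autU L M E t.1, F.rel (σ • t.2.1) t'.2.1 ∧ G.rel (σ • t.2.2) t'.2.2

def StepSnd (t t' : (α → M) × (β → M) × (γ → M)) : Prop :=
  t'.2.1 = t.2.1 ∧ ∃ σ ∈ autU L M F t.2.1, E.rel (σ • t.1) t'.1 ∧ G.rel (σ • t.2.2) t'.2.2

def CrabWalk : (α → M) × (β → M) × (γ → M) → (α → M) × (β → M) × (γ → M) → Prop :=
  Relation.ReflTransGen (StepFst E F G ⊔ StepSnd E F G)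

variable {E F G}

theorem TripleRel.refl (t : (α → M) × (β → M) × (γ → M)) : TripleRel E F G t t :=
  ⟨E.equiv.refl _, F.equiv.refl _, G.equiv.refl _⟩

theorem TripleRel.trans (h : TripleRel E F G t t') (h' : TripleRel E F G t' t'') :
    TripleRel E F G t t'' :=
  ⟨E.equiv.trans h.1 h'.1, F.equiv.trans h.2.1 h'.2.1, G.equiv.trans h.2.2 h'.2.2⟩

theorem TripleRel.smul (σ : M ≃[L] M) (h : TripleRel E F G t t') :
    TripleRel E F G (σ • t) (σ • t') :=
  ⟨(E.rel_smul_iff σ).2 h.1, (F.rel_smul_iff σ).2 h.2.1, (G.rel_smul_iff σ).2 h.2.2⟩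

theorem stepFst_refl (t : (α → M) × (β → M) × (γ → M)) : StepFst E F G t t :=
  ⟨rfl, 1, E.equiv.refl _, F.equiv.refl _, G.equiv.refl _⟩

theorem stepSnd_refl (t : (α → M) × (β → M) × (γ → M)) : StepSnd E F G t t :=
  ⟨rfl, 1, F.equiv.refl _, E.equiv.refl _, G.equiv.refl _⟩

theorem StepFst.symm (h : StepFst E F G t t') : StepFst E F G t' t := by
  obtain ⟨h1, σ, hσ, hF, hG⟩ := h
  refine ⟨h1.symm, σ⁻¹, ?_, F.rel_inv_smul hF, G.rel_inv_smul hG⟩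
  rw [h1]
  exact (E.stabilizer t.1).inv_mem hσ

theorem StepSnd.symm (h : StepSnd E F G t t') : StepSnd E F G t' t := by
  obtain ⟨h1, σ, hσ, hE, hG⟩ := h
  refine ⟨h1.symm, σ⁻¹, ?_, E.rel_inv_smul hE, G.rel_inv_smul hG⟩
  rw [h1]
  exact (F.stabilizer t.2.1).inv_mem hσ

theorem StepFst.smul (σ : M ≃[L] M) (h : StepFst E F G t t') :
    StepFst E F G (σ • t) (σ • t') := by
  obtain ⟨h1, ρ, hρ, hF, hG⟩ := h
  refine ⟨congrArg (σ • ·) h1, σ * ρ * σ⁻¹, conj_mem_autU_smul E σ hρ, ?_, ?_⟩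
  · exact (smul_conj_smul σ ρ t.2.1).symm ▸ (F.rel_smul_iff σ).2 hF
  · exact (smul_conj_smul σ ρ t.2.2).symm ▸ (G.rel_smul_iff σ).2 hG

theorem StepSnd.smul (σ : M ≃[L] M) (h : StepSnd E F G t t') :
    StepSnd E F G (σ • t) (σ • t') := by
  obtain ⟨h1, ρ, hρ, hE, hG⟩ := h
  refine ⟨congrArg (σ • ·) h1, σ * ρ * σ⁻¹, conj_mem_autU_smul F σ hρ, ?_, ?_⟩
  · exact (smul_conj_smul σ ρ t.1).symm ▸ (E.rel_smul_iff σ).2 hE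
  · exact (smul_conj_smul σ ρ t.2.2).symm ▸ (G.rel_smul_iff σ).2 hG

theorem StepFst.exists_tripleRel (h : StepFst E F G t t') :
    ∃ σ ∈ autU L M E t.1, TripleRel E F G (σ • t) t' := by
  obtain ⟨h1, σ, hσ, hF, hG⟩ := h
  exact ⟨σ, hσ, h1 ▸ E.equiv.symm hσ, hF, hG⟩

theorem StepSnd.exists_tripleRel (h : StepSnd E F G t t') :
    ∃ σ ∈ autU L M F t.2.1, TripleRel E F G (σ • t) t' := by
  obtain ⟨h1, σ, hσ, hE, hG⟩ := h
  exact ⟨σ, hσ, hE, h1 ▸ F.equiv.symm hσ, hG⟩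

variable (E F G) in
theorem crabWalk_equivalence : Equivalence (CrabWalk E F G) :=
  have : Std.Symm (StepFst E F G ⊔ StepSnd E F G) :=
    ⟨fun _ _ h => h.elim (fun h => Or.inl h.symm) (fun h => Or.inr h.symm)⟩
  ⟨fun _ => .refl, fun h => Relation.ReflTransGen.stdSymm.symm _ _ h, .trans⟩

theorem CrabWalk.smul (σ : M ≃[L] M) (h : CrabWalk E F G t t') :
    CrabWalk E F G (σ • t) (σ • t') :=
  Relation.ReflTransGen.lift (σ • ·)
    (fun _ _ h => h.elim (fun h => Or.inl (h.smul σ)) (fun h => Or.inr (h.smul σ))) _ _ h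

theorem CrabWalk.exists_mem_closure (h : CrabWalk E F G t t') :
    ∃ τ ∈ Subgroup.closure (autU L M E t.1 ∪ autU L M F t.2.1),
      TripleRel E F G (τ • t) t' := by
  induction h with
  | refl => exact ⟨1, one_mem _, (one_smul (M ≃[L] M) t).symm ▸ TripleRel.refl t⟩
  | @tail t' t'' _ hstep ih =>
    obtain ⟨τ, hτ, hrel⟩ := ih
    obtain ⟨σ, hσ, hσrel⟩ : ∃ σ ∈ autU L M E t'.1 ∪ autU L M F t'.2.1,
        TripleRel E F G (σ • t') t'' :=
      hstep.elim (fun h => h.exists_tripleRel.imp fun _ => And.imp_left Or.inl)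
        (fun h => h.exists_tripleRel.imp fun _ => And.imp_left Or.inr)
    -- `Aut(𝕄/t'.1_E) = Aut(𝕄/(τ • t).1_E)` is the `τ`-conjugate of `Aut(𝕄/t.1_E)`
    have hconj : τ⁻¹ * σ * τ ∈ autU L M E t.1 ∪ autU L M F t.2.1 := by
      rw [← autU_congr E hrel.1, ← autU_congr F hrel.2.1] at hσ
      exact hσ.imp (mem_autU_smul E τ).1 (mem_autU_smul F τ).1
    refine ⟨σ * τ, ?_, mul_smul σ τ t ▸ (hrel.smul σ).trans hσrel⟩
    simpa only [mul_inv_cancel_left, mul_assoc] using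
      mul_mem hτ (Subgroup.subset_closure hconj)

theorem CrabWalk.of_mem_closure {τ : M ≃[L] M}
    (hτ : τ ∈ Subgroup.closure (autU L M E t.1 ∪ autU L M F t.2.1)) :
    CrabWalk E F G t (τ • t) := by
  refine (Subgroup.closure_le (relStabilizer (CrabWalk E F G) (crabWalk_equivalence E F G)
    (fun σ _ _ => CrabWalk.smul σ) t)).2 ?_ hτ
  rintro ρ (hρ | hρ)
  · exact .tail (b := (t.1, ρ • t.2.1, ρ • t.2.2))
      (.single (Or.inl ⟨rfl, ρ, hρ, F.equiv.refl _, G.equiv.refl _⟩))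
      (Or.inr ⟨rfl, 1, F.equiv.refl _, hρ, G.equiv.refl _⟩)
  · exact .tail (b := (ρ • t.1, t.2.1, ρ • t.2.2))
      (.single (Or.inr ⟨rfl, ρ, hρ, E.equiv.refl _, G.equiv.refl _⟩))
      (Or.inl ⟨rfl, 1, E.equiv.refl _, hρ, G.equiv.refl _⟩)

end CrabWalk

section CrabIER

variable {L : FirstOrder.Language.{u, u}} {M : Type u} [L.Structure M] {α β γ : Type u}
variable {E : IER L M α} {F : IER L M β} {G : IER L M γ}

theorem stepFst_of_rel {t : (α → M) × (β → M) × (γ → M)} {c' : γ → M}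
    (h : G.rel t.2.2 c') : StepFst E F G t (t.1, t.2.1, c') :=
  ⟨rfl, 1, E.equiv.refl _, F.equiv.refl _, h⟩

theorem exists_crabWalk_iff {a : α → M} {b : β → M} {c c' : γ → M} :
    (∃ a' b', CrabWalk E F G (a, b, c) (a', b', c')) ↔
      ∃ (n : ℕ) (as : ℕ → α → M) (bs : ℕ → β → M) (cs : ℕ → γ → M),
        as 0 = a ∧ bs 0 = b ∧ cs 0 = c ∧ cs n = c' ∧
        IsAlternatingWalk (StepFst E F G) (StepSnd E F G) n fun i => (as i, bs i, cs i) := by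
  simp only [CrabWalk, reflTransGen_sup_iff_exists_isAlternatingWalk stepFst_refl stepSnd_refl]
  constructor
  · rintro ⟨a', b', n, w, hw0, hwn, hw⟩
    exact ⟨n, fun i => (w i).1, fun i => (w i).2.1, fun i => (w i).2.2,
      congrArg (·.1) hw0, congrArg (·.2.1) hw0, congrArg (·.2.2) hw0, congrArg (·.2.2) hwn, hw⟩
  · rintro ⟨n, as, bs, cs, rfl, rfl, rfl, rfl, hw⟩
    exact ⟨as n, bs n, n, _, rfl, rfl, hw⟩

variable (E F G) in
def crabIER
    (hom : ∀ u v : (α ⊕ β ⊕ γ) ⊕ (α ⊕ β ⊕ γ) → M, SameType L M u v →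
      ∃ σ : M ≃[L] M, ∀ i, σ (u i) = v i) :
    IER L M (α ⊕ β ⊕ γ) :=
  let toTriple (x : α ⊕ β ⊕ γ → M) : (α → M) × (β → M) × (γ → M) :=
    (x ∘ Sum.inl, x ∘ Sum.inr ∘ Sum.inl, x ∘ Sum.inr ∘ Sum.inr)
  IER.ofSmul (fun x y => CrabWalk E F G (toTriple x) (toTriple y))
    ((crabWalk_equivalence E F G).comap toTriple) (fun σ _ _ h => h.smul σ) hom

end CrabIER

theorem mk_sum_lt {κ : Cardinal.{u}} (hκ : ℵ₀ ≤ κ) {α β : Type u} (hα : #α < κ)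
    (hβ : #β < κ) : #(α ⊕ β) < κ := by
  simpa only [mk_sum, lift_id] using add_lt_of_lt hκ hα hβ

/-- For ultraimaginaries `a_E`, `b_F`, `c_G`, `c'_G` the following
are equivalent: (1) for every cardinal `λ` there is an automorphism fixing every
element of `dclᵘ_λ(a_E) ∩ dclᵘ_λ(b_F)` and sending `c_G` to `c'_G`; (2) some
`σ ∈ ⟨Aut(𝕄/a_E) ∪ Aut(𝕄/b_F)⟩` sends `c_G` to `c'_G`; (3) there is a finite
crab-walk from `c` to `c'` alternately conjugating over `a_E` and over `b_F`. -/
theorem statement_5 (L : FirstOrder.Language.{u, u}) (M : Type u) [L.Structure M]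
    (κbar : Cardinal.{u}) (_mon : Monster L M κbar)
    {α β γ : Type u} (hα : #α < κbar) (hβ : #β < κbar) (hγ : #γ < κbar)
    (E : IER L M α) (a : α → M) (F : IER L M β) (b : β → M)
    (G : IER L M γ) (c c' : γ → M) :
    ((∀ lam : Cardinal.{u}, ∃ σ : M ≃[L] M,
        (∀ (δ : Type u), #δ ≤ lam → ∀ (H : IER L M δ) (d : δ → M),
          autU L M E a ⊆ autU L M H d → autU L M F b ⊆ autU L M H d →
            H.rel d (⇑σ ∘ d)) ∧
        G.rel (⇑σ ∘ c) c') ↔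
      (∃ σ ∈ Subgroup.closure (autU L M E a ∪ autU L M F b), G.rel (⇑σ ∘ c) c')) ∧
    ((∃ σ ∈ Subgroup.closure (autU L M E a ∪ autU L M F b), G.rel (⇑σ ∘ c) c') ↔
      (∃ (n : ℕ) (as : ℕ → α → M) (bs : ℕ → β → M) (cs : ℕ → γ → M),
        as 0 = a ∧ bs 0 = b ∧ cs 0 = c ∧ cs n = c' ∧
        ∀ i < n,
          (Even i → as (i + 1) = as i ∧
            ∃ σ ∈ autU L M E (as i),
              F.rel (⇑σ ∘ bs i) (bs (i + 1)) ∧ G.rel (⇑σ ∘ cs i) (cs (i + 1))) ∧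
          (¬ Even i → bs (i + 1) = bs i ∧
            ∃ σ ∈ autU L M F (bs i),
              E.rel (⇑σ ∘ as i) (as (i + 1)) ∧ G.rel (⇑σ ∘ cs i) (cs (i + 1))))) := by
  have hκ : ℵ₀ ≤ κbar := _mon.aleph0_lt.le
  have hcard : #(α ⊕ β ⊕ γ) < κbar := mk_sum_lt hκ hα (mk_sum_lt hκ hβ hγ)
  have hclosure {ρ} (hρ : ρ ∈ Subgroup.closure (autU L M E a ∪ autU L M F b)) :
      CrabWalk E F G (a, b, c) (ρ • (a, b, c)) :=
    CrabWalk.of_mem_closure hρ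
  have h2_iff_walk : (∃ σ ∈ Subgroup.closure (autU L M E a ∪ autU L M F b),
      G.rel (⇑σ ∘ c) c') ↔ ∃ a' b', CrabWalk E F G (a, b, c) (a', b', c') := by
    refine ⟨fun ⟨σ, hσ, hσc⟩ => ⟨σ • a, σ • b, (hclosure hσ).tail
      (Or.inl (stepFst_of_rel hσc))⟩, fun ⟨_, _, h⟩ => ?_⟩
    obtain ⟨τ, hτ, -, -, hτc⟩ := h.exists_mem_closure
    exact ⟨τ, hτ, hτc⟩
  refine ⟨⟨fun h1 => h2_iff_walk.2 ?_, ?_⟩, h2_iff_walk.trans exists_crabWalk_iff⟩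
  · obtain ⟨σ, hfix, hσc⟩ := h1 #(α ⊕ β ⊕ γ)
    have hwalk : CrabWalk E F G (a, b, c) (σ • (a, b, c)) :=
      hfix _ le_rfl (crabIER E F G fun u v => _mon.homog _ u v (mk_sum_lt hκ hcard hcard))
        (Sum.elim a (Sum.elim b c))
        (fun _ hρ => hclosure (Subgroup.subset_closure (Or.inl hρ)))
        (fun _ hρ => hclosure (Subgroup.subset_closure (Or.inr hρ)))
    exact ⟨σ • a, σ • b, hwalk.tail (Or.inl (stepFst_of_rel hσc))⟩
  · rintro ⟨σ, hσ, hσc⟩ lam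
    exact ⟨σ, fun δ _ K d ha hb =>
      (Subgroup.closure_le (K.stabilizer d)).2 (Set.union_subset ha hb) hσ, hσc⟩

end BddUltra
end

section
/- The relation ⫝ᵇᵘ on ultraimaginaries satisfies: (Invariance) if a_E b_F c_G ≡ a'_E b'_F c'_G then b_F ⫝ᵇᵘ_{a_E} c_G iff b'_F ⫝ᵇᵘ_{a'_E} c'_G; (Symmetry) b_F ⫝ᵇᵘ_{a_E} c_G iff c_G ⫝ᵇᵘ_{a_E} b_F; (Monotonicity) if b_F c_G ⫝ᵇᵘ_{a_E} d_H e_I then b_F ⫝ᵇᵘ_{a_E} d_H; (Transitivity) if b_F ⫝ᵇᵘ_{a_E} c_G and d_H ⫝ᵇᵘ_{a_E b_F} c_G then b_F d_H ⫝ᵇᵘ_{a_E} c_G; (Normality) if b_F ⫝ᵇᵘ_{a_E} c_G then a_E b_F ⫝ᵇᵘ_{a_E} a_E c_G; (Anti-reflexivity) if b_F ⫝ᵇᵘ_{a_E} b_F then b_F ∈ bddᵘ(a_E). -/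
open FirstOrder Cardinal

universe u v w

namespace BddUltra

variable (L : FirstOrder.Language.{u, u}) (M : Type u) [L.Structure M]

/-! Every clause is a statement about stabilizers: the stabilizer of a juxtaposition
`a_E b_F` is `Aut(𝕄/a_E) ∩ Aut(𝕄/b_F)`, boundedness over a set of automorphisms only gets
easier when the set shrinks, and an automorphism `σ` transports stabilizers by conjugation
and orbits by `σ`. Invariance, symmetry, monotonicity, transitivity and normality are then
formal; anti-reflexivity holds because `b_F` is bounded (by the single class `{b}`) over any
set of automorphisms fixing it. -/

section

variable {L : FirstOrder.Language.{u, u}} {M : Type u} [L.Structure M]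

@[simp]
lemma equiv_mul_apply (σ τ : M ≃[L] M) (x : M) : (σ * τ) x = σ (τ x) := rfl

@[simp]
lemma equiv_inv_apply_apply (σ : M ≃[L] M) (x : M) : σ⁻¹ (σ x) = x :=
  σ.symm_apply_apply x

@[simp]
lemma equiv_apply_inv_apply (σ : M ≃[L] M) (x : M) : σ (σ⁻¹ x) = x :=
  σ.apply_symm_apply x

lemma IER.rel_comp_iff {α : Type u} (E : IER L M α) (σ : M ≃[L] M) (x y : α → M) :
    E.rel (⇑σ ∘ x) (⇑σ ∘ y) ↔ E.rel x y := by
  refine E.invariant _ _ _ _ fun φ => ?_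
  rw [← Sum.comp_elim]
  exact Language.StrongHomClass.realize_formula σ φ

lemma autU_congr_s8 {α : Type u} (E : IER L M α) {a a' : α → M} (h : E.rel a a') :
    autU L M E a = autU L M E a' := by
  ext τ
  have hτ := (E.rel_comp_iff τ a a').2 h
  exact ⟨fun hm => E.equiv.trans (E.equiv.trans (E.equiv.symm h) hm) hτ,
    fun hm => E.equiv.trans (E.equiv.trans h hm) (E.equiv.symm hτ)⟩

lemma conj_apply_comp (σ ρ : M ≃[L] M) {α : Type*} (x : α → M) :
    ⇑(MulAut.conj σ ρ) ∘ (⇑σ ∘ x) = ⇑σ ∘ (⇑ρ ∘ x) := by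
  funext i; simp [MulAut.conj_apply]

lemma autU_comp {α : Type u} (E : IER L M α) (σ : M ≃[L] M) (a : α → M) :
    autU L M E (⇑σ ∘ a) = MulAut.conj σ '' autU L M E a := by
  ext τ
  obtain ⟨ρ, rfl⟩ := (MulAut.conj σ).surjective τ
  rw [(MulAut.conj σ).injective.mem_set_image]
  exact (congrArg (E.rel _) (conj_apply_comp σ ρ a)).to_iff.trans (E.rel_comp_iff σ _ _)

lemma BddU.mono {κ : Cardinal.{u}} {X Y : Set (M ≃[L] M)} {β : Type u}
    {F : IER L M β} {b : β → M} (hXY : X ⊆ Y) (h : BddU L M κ Y F b) :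
    BddU L M κ X F b := by
  obtain ⟨S, hS, hY⟩ := h
  exact ⟨S, hS, fun σ hσ => hY σ (hXY hσ)⟩

lemma bddU_of_subset_autU {κ : Cardinal.{u}} (hκ : 1 < κ) {X : Set (M ≃[L] M)} {β : Type u}
    {F : IER L M β} {b : β → M} (hX : X ⊆ autU L M F b) : BddU L M κ X F b :=
  ⟨{b}, by rwa [Cardinal.mk_singleton], fun _ hσ => ⟨b, rfl, F.equiv.symm (hX hσ)⟩⟩

lemma BddU.image_conj {κ : Cardinal.{u}} {X : Set (M ≃[L] M)} {β : Type u}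
    {F : IER L M β} {b : β → M} (σ : M ≃[L] M) (h : BddU L M κ X F b) :
    BddU L M κ (MulAut.conj σ '' X) F (⇑σ ∘ b) := by
  obtain ⟨S, hS, hX⟩ := h
  refine ⟨(⇑σ ∘ ·) '' S, Cardinal.mk_image_le.trans_lt hS, ?_⟩
  rintro _ ⟨ρ, hρ, rfl⟩
  obtain ⟨s, hs, hrel⟩ := hX ρ hρ
  refine ⟨⇑σ ∘ s, Set.mem_image_of_mem _ hs, ?_⟩
  rwa [conj_apply_comp, F.rel_comp_iff]

lemma bddU_image_conj_iff {κ : Cardinal.{u}} {X : Set (M ≃[L] M)} {β : Type u}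
    {F : IER L M β} {b : β → M} (σ : M ≃[L] M) :
    BddU L M κ (MulAut.conj σ '' X) F (⇑σ ∘ b) ↔ BddU L M κ X F b := by
  refine ⟨fun h => ?_, BddU.image_conj σ⟩
  simpa [Set.image_image, MulAut.conj_apply, mul_assoc, Function.comp_def] using
    h.image_conj σ⁻¹

lemma indepBU_image_conj_iff {κ : Cardinal.{u}} {X Y Z : Set (M ≃[L] M)} (σ : M ≃[L] M) :
    IndepBU L M κ (MulAut.conj σ '' X) (MulAut.conj σ '' Y) (MulAut.conj σ '' Z) ↔
      IndepBU L M κ X Y Z := by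
  refine forall_congr' fun δ => forall_congr' fun H => ?_
  have hsurj : Function.Surjective fun d : δ → M => ⇑σ ∘ d :=
    fun d => ⟨⇑σ⁻¹ ∘ d, by funext i; simp⟩
  exact hsurj.forall.trans (forall_congr' fun _ => by simp only [bddU_image_conj_iff])

lemma IndepBU.symm {κ : Cardinal.{u}} {X Y Z : Set (M ≃[L] M)} (h : IndepBU L M κ X Y Z) :
    IndepBU L M κ X Z Y :=
  fun δ H d => and_comm.trans (h δ H d)

lemma IndepBU.mono {κ : Cardinal.{u}} {X Y Z Y' Z' : Set (M ≃[L] M)}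
    (h : IndepBU L M κ X Y Z) (hY : Y ⊆ Y') (hZ : Z ⊆ Z') (hY' : Y' ⊆ X) (hZ' : Z' ⊆ X) :
    IndepBU L M κ X Y' Z' := fun δ H d =>
  ⟨fun ⟨hbY, hbZ⟩ => (h δ H d).1 ⟨hbY.mono hY, hbZ.mono hZ⟩,
    fun hbX => ⟨hbX.mono hY', hbX.mono hZ'⟩⟩

lemma IndepBU.trans {κ : Cardinal.{u}} {X Y Z W V : Set (M ≃[L] M)}
    (hXYZ : IndepBU L M κ X Y Z) (hYWV : IndepBU L M κ Y W V) (hVZ : V ⊆ Z) :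
    IndepBU L M κ X W Z := fun δ H d =>
  ⟨fun ⟨hbW, hbZ⟩ => (hXYZ δ H d).1 ⟨(hYWV δ H d).1 ⟨hbW, hbZ.mono hVZ⟩, hbZ⟩,
    fun hbX => ⟨((hYWV δ H d).2 ((hXYZ δ H d).2 hbX).1).1, ((hXYZ δ H d).2 hbX).2⟩⟩

lemma IndepBU.bddU_of_self {κ : Cardinal.{u}} {X Y : Set (M ≃[L] M)} {δ : Type u}
    {H : IER L M δ} {d : δ → M} (h : IndepBU L M κ X Y Y) (hd : BddU L M κ Y H d) :
    BddU L M κ X H d :=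
  (h δ H d).1 ⟨hd, hd⟩

lemma autU_prod {α β : Type u} (E : IER L M α) (F : IER L M β) (a : α → M) (b : β → M) :
    autU L M (IER.prod L M E F) (Sum.elim a b) = autU L M E a ∩ autU L M F b := rfl

variable {κ : Cardinal.{u}} {α β γ δ ε : Type u} {E : IER L M α} {F : IER L M β}
  {G : IER L M γ} {H : IER L M δ} {I : IER L M ε}
  {a a' : α → M} {b b' : β → M} {c c' : γ → M} {d : δ → M} {e : ε → M}

lemma indepU_congr (ha : E.rel a a') (hb : F.rel b b') (hc : G.rel c c') :
    IndepU L M κ E a F b G c ↔ IndepU L M κ E a' F b' G c' := by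
  rw [IndepU, IndepU, autU_congr_s8 E ha, autU_congr_s8 F hb, autU_congr_s8 G hc]

lemma indepU_comp_iff (σ : M ≃[L] M) :
    IndepU L M κ E (⇑σ ∘ a) F (⇑σ ∘ b) G (⇑σ ∘ c) ↔ IndepU L M κ E a F b G c := by
  simp only [IndepU, autU_comp, ← Set.image_inter (MulAut.conj σ).injective,
    indepBU_image_conj_iff]

lemma IndepU.symm (h : IndepU L M κ E a F b G c) : IndepU L M κ E a G c F b :=
  IndepBU.symm h

lemma IndepU.of_prod (h : IndepU L M κ E a (IER.prod L M F G) (Sum.elim b c)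
    (IER.prod L M H I) (Sum.elim d e)) : IndepU L M κ E a F b H d := by
  rw [IndepU, autU_prod, autU_prod] at h
  exact h.mono (Set.inter_subset_inter_right _ Set.inter_subset_left)
    (Set.inter_subset_inter_right _ Set.inter_subset_left)
    Set.inter_subset_left Set.inter_subset_left

lemma IndepU.trans (h : IndepU L M κ E a F b G c)
    (h' : IndepU L M κ (IER.prod L M E F) (Sum.elim a b) H d G c) :
    IndepU L M κ E a (IER.prod L M F H) (Sum.elim b d) G c := by
  rw [IndepU, autU_prod] at h'
  rw [IndepU, autU_prod, ← Set.inter_assoc]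
  exact IndepBU.trans h h' (Set.inter_subset_inter_left _ Set.inter_subset_left)

lemma IndepU.prod_self (h : IndepU L M κ E a F b G c) :
    IndepU L M κ E a (IER.prod L M E F) (Sum.elim a b) (IER.prod L M E G) (Sum.elim a c) := by
  rwa [IndepU, autU_prod, autU_prod, ← Set.inter_assoc, ← Set.inter_assoc, Set.inter_self]

lemma IndepU.bddU_of_self (hκ : 1 < κ) (h : IndepU L M κ E a F b F b) :
    BddU L M κ (autU L M E a) F b :=
  IndepBU.bddU_of_self h (bddU_of_subset_autU hκ Set.inter_subset_right)

end

/-- Basic properties of `⫝ᵇᵘ` on ultraimaginaries: invariance,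
symmetry, monotonicity, transitivity, normality and anti-reflexivity. -/
theorem statement_8 (L : FirstOrder.Language.{u, u}) (M : Type u) [L.Structure M]
    (κbar : Cardinal.{u}) (_mon : Monster L M κbar) :
    (∀ (α β γ : Type u) (E : IER L M α) (F : IER L M β) (G : IER L M γ)
        (a a' : α → M) (b b' : β → M) (c c' : γ → M),
      (∃ σ : M ≃[L] M, E.rel (⇑σ ∘ a) a' ∧ F.rel (⇑σ ∘ b) b' ∧ G.rel (⇑σ ∘ c) c') →
        (IndepU L M κbar E a F b G c ↔ IndepU L M κbar E a' F b' G c')) ∧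
    (∀ (α β γ : Type u) (E : IER L M α) (F : IER L M β) (G : IER L M γ)
        (a : α → M) (b : β → M) (c : γ → M),
      IndepU L M κbar E a F b G c ↔ IndepU L M κbar E a G c F b) ∧
    (∀ (α β γ δ ε : Type u) (E : IER L M α) (F : IER L M β) (G : IER L M γ)
        (H : IER L M δ) (I : IER L M ε)
        (a : α → M) (b : β → M) (c : γ → M) (d : δ → M) (e : ε → M),
      IndepU L M κbar E a (IER.prod L M F G) (Sum.elim b c) (IER.prod L M H I) (Sum.elim d e) →
        IndepU L M κbar E a F b H d) ∧
    (∀ (α β γ δ : Type u) (E : IER L M α) (F : IER L M β) (G : IER L M γ)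
        (H : IER L M δ) (a : α → M) (b : β → M) (c : γ → M) (d : δ → M),
      IndepU L M κbar E a F b G c →
        IndepU L M κbar (IER.prod L M E F) (Sum.elim a b) H d G c →
          IndepU L M κbar E a (IER.prod L M F H) (Sum.elim b d) G c) ∧
    (∀ (α β γ : Type u) (E : IER L M α) (F : IER L M β) (G : IER L M γ)
        (a : α → M) (b : β → M) (c : γ → M),
      IndepU L M κbar E a F b G c →
        IndepU L M κbar E a (IER.prod L M E F) (Sum.elim a b) (IER.prod L M E G) (Sum.elim a c)) ∧
    (∀ (α β : Type u) (E : IER L M α) (F : IER L M β) (a : α → M) (b : β → M),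
      IndepU L M κbar E a F b F b → BddU L M κbar (autU L M E a) F b) := by
  have hκ : 1 < κbar := Cardinal.one_lt_aleph0.trans _mon.aleph0_lt
  refine ⟨fun _ _ _ _ _ _ _ _ _ _ _ _ ⟨σ, ha, hb, hc⟩ =>
      (indepU_comp_iff σ).symm.trans (indepU_congr ha hb hc),
    fun _ _ _ _ _ _ _ _ _ => ⟨IndepU.symm, IndepU.symm⟩,
    fun _ _ _ _ _ _ _ _ _ _ _ _ _ _ _ => IndepU.of_prod,
    fun _ _ _ _ _ _ _ _ _ _ _ _ => IndepU.trans,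
    fun _ _ _ _ _ _ _ _ _ => IndepU.prod_self,
    fun _ _ _ _ _ _ => IndepU.bddU_of_self hκ⟩

end BddUltra
end

section
/- (Weak chain condition) If (b_i)_{i<ω} is a ⫝ᵇᵘ-Morley sequence over A that is moreover Ac-indiscernible, then b₀ ⫝ᵇᵘ_A c. -/
open FirstOrder Cardinal

universe u v w

namespace BddUltra

variable (L : FirstOrder.Language.{u, u}) (M : Type u) [L.Structure M]

/-!
Given an ultraimaginary `d` bounded over `Ab₀` and over `Ac`, say with fewer than `λ`
`Ac`-conjugates, stretch `(bᵢ)` by compactness to an `Ac`-indiscernible sequence `(b'ᵢ)_{i<λ}`.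
The automorphisms over `Ac` carrying `b₀` to the `b'ᵢ` must send `d` to the same class for some
`i < j`. That class is bounded over `Ab'ᵢ` and over `Ab'ⱼ`, and `b'ⱼ ⫝ᵇᵘ_A b'ᵢ` is a conjugate
over `A` of `b₁ ⫝ᵇᵘ_A b₀`, so it is bounded over `A`; hence so is `d`.
-/

section WeakChain

variable {L M}

theorem sameType_comp_equiv (σ : M ≃[L] M) {α : Type v} (a : α → M) :
    SameType L M a (σ ∘ a) := fun φ =>
  (Language.StrongHomClass.realize_formula σ φ).symm

theorem IER.rel_comp_equiv {α : Type u} (E : IER L M α) (σ : M ≃[L] M) {x y : α → M}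
    (h : E.rel x y) : E.rel (σ ∘ x) (σ ∘ y) := by
  refine (E.invariant x y _ _ ?_).mp h
  rw [← Sum.comp_elim]
  exact sameType_comp_equiv σ _

theorem autSetTup_eq_autSet_union_range (A : Set M) {γ : Type v} (u : γ → M) :
    autSetTup L M A u = autSet L M (A ∪ Set.range u) := by
  ext σ
  simp [autSetTup, autSet, or_imp, forall_and]

theorem autSet_anti {A B : Set M} (h : A ⊆ B) : autSet L M B ⊆ autSet L M A :=
  fun _ hσ x hx => hσ x (h hx)

theorem mem_autSet_image_iff (σ τ : M ≃[L] M) (B : Set M) :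
    τ ∈ autSet L M (σ '' B) ↔ σ⁻¹ * τ * σ ∈ autSet L M B := by
  simp only [autSet, Set.forall_mem_image, Set.mem_ofPred_eq]
  exact forall₂_congr fun x _ => σ.toEquiv.symm_apply_eq.symm

theorem image_eq_self_of_mem_autSet {A : Set M} {σ : M ≃[L] M} (hσ : σ ∈ autSet L M A) :
    ⇑σ '' A = A := by
  rw [Set.image_congr hσ, Set.image_id']

theorem autSetTup_comp_of_surjective {A : Set M} {γ : Type v} {γ' : Type w} {f : γ' → γ}
    (hf : Function.Surjective f) (u : γ → M) :
    autSetTup L M A (u ∘ f) = autSetTup L M A u := by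
  rw [autSetTup_eq_autSet_union_range, autSetTup_eq_autSet_union_range, Set.range_comp,
    hf.range_eq, Set.image_univ]

variable {κ : Cardinal.{u}} {X X' : Set (M ≃[L] M)} {δ : Type u} {H : IER L M δ}
  {d d' : δ → M}

theorem BddU.mono_s17 (hX : X' ⊆ X) (hd : BddU L M κ X H d) : BddU L M κ X' H d :=
  let ⟨S, hS, h⟩ := hd
  ⟨S, hS, fun τ hτ => h τ (hX hτ)⟩

theorem BddU.of_rel (hr : H.rel d d') (hd : BddU L M κ X H d') : BddU L M κ X H d := by
  obtain ⟨S, hS, h⟩ := hd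
  refine ⟨S, hS, fun τ hτ => ?_⟩
  obtain ⟨s, hs, hτs⟩ := h τ hτ
  exact ⟨s, hs, H.equiv.trans (H.rel_comp_equiv τ hr) hτs⟩

theorem BddU.comp_equiv (σ : M ≃[L] M) (hX : ∀ τ ∈ X', σ⁻¹ * τ * σ ∈ X)
    (hd : BddU L M κ X H d) : BddU L M κ X' H (σ ∘ d) := by
  obtain ⟨S, hS, h⟩ := hd
  refine ⟨(σ ∘ ·) '' S, Cardinal.mk_image_le.trans_lt hS, fun τ hτ => ?_⟩
  obtain ⟨s, hs, hrel⟩ := h _ (hX τ hτ)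
  refine ⟨σ ∘ s, Set.mem_image_of_mem _ hs, ?_⟩
  have hconj : τ ∘ σ ∘ d = σ ∘ (σ⁻¹ * τ * σ) ∘ d :=
    funext fun z => (σ.apply_symm_apply _).symm
  rw [hconj]
  exact H.rel_comp_equiv σ hrel

theorem bddU_autSet_image_comp_iff (σ : M ≃[L] M) (B : Set M) :
    BddU L M κ (autSet L M (σ '' B)) H (σ ∘ d) ↔ BddU L M κ (autSet L M B) H d := by
  refine ⟨fun hd => ?_, BddU.comp_equiv σ fun τ => (mem_autSet_image_iff σ τ B).1⟩
  have hd' := hd.comp_equiv σ⁻¹ fun τ hτ => by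
    simpa [mem_autSet_image_iff, mul_assoc] using hτ
  rwa [show ⇑σ⁻¹ ∘ ⇑σ ∘ d = d from funext fun z => σ.symm_apply_apply (d z)] at hd'

theorem BddU.exists_lt_rel {ι : Type u} [LinearOrder ι] (hd : BddU L M κ X H d)
    (σ : ι → M ≃[L] M) (hσ : ∀ i, σ i ∈ X) (hι : κ ≤ #ι) :
    ∃ i j, i < j ∧ H.rel (σ i ∘ d) (σ j ∘ d) := by
  obtain ⟨S, hS, h⟩ := hd
  choose s hsS hs using fun i => h (σ i) (hσ i)
  have hninj : ¬ Function.Injective fun i => (⟨s i, hsS i⟩ : S) := fun hinj =>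
    (Cardinal.mk_le_of_injective hinj).not_gt (hS.trans_le hι)
  obtain ⟨i, j, hij, hne⟩ := Function.not_injective_iff.1 hninj
  have hsij : s i = s j := congrArg Subtype.val hij
  have hrel : H.rel (σ i ∘ d) (σ j ∘ d) := H.equiv.trans (hs i) (hsij ▸ H.equiv.symm (hs j))
  rcases hne.lt_or_gt with hlt | hgt
  · exact ⟨i, j, hlt, hrel⟩
  · exact ⟨j, i, hgt, H.equiv.symm hrel⟩

variable {A : Set M} {σ : M ≃[L] M}

theorem bddU_autSet_comp_iff (hσ : σ ∈ autSet L M A) :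
    BddU L M κ (autSet L M A) H (σ ∘ d) ↔ BddU L M κ (autSet L M A) H d := by
  conv_lhs => rw [← image_eq_self_of_mem_autSet hσ]
  exact bddU_autSet_image_comp_iff σ A

theorem bddU_autSetTup_comp_iff (hσ : σ ∈ autSet L M A) {γ : Type v} (u : γ → M) :
    BddU L M κ (autSetTup L M A (σ ∘ u)) H (σ ∘ d) ↔ BddU L M κ (autSetTup L M A u) H d := by
  rw [autSetTup_eq_autSet_union_range, autSetTup_eq_autSet_union_range, Set.range_comp,
    ← image_eq_self_of_mem_autSet hσ, ← Set.image_union, image_eq_self_of_mem_autSet hσ]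
  exact bddU_autSet_image_comp_iff σ _

theorem IndepBUReal.comp_equiv {γ : Type v} {γ' : Type w} {x : γ → M} {y : γ' → M}
    (h : IndepBUReal L M κ A x y) (hσ : σ ∈ autSet L M A) :
    IndepBUReal L M κ A (σ ∘ x) (σ ∘ y) := by
  intro δ H e
  have he : ⇑σ ∘ ⇑σ⁻¹ ∘ e = e := funext fun z => σ.apply_symm_apply (e z)
  rw [← he, bddU_autSetTup_comp_iff hσ, bddU_autSetTup_comp_iff hσ, bddU_autSet_comp_iff hσ]
  exact h δ H _

theorem bddU_of_rel_of_indepBUReal {σ' : M ≃[L] M} {β : Type v} {u : β → M}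
    (hσ : σ ∈ autSet L M A) (hσ' : σ' ∈ autSet L M A)
    (hind : IndepBUReal L M κ A (σ' ∘ u) (σ ∘ u)) (hd : BddU L M κ (autSetTup L M A u) H d)
    (hrel : H.rel (σ ∘ d) (σ' ∘ d)) : BddU L M κ (autSet L M A) H d := by
  have h' : BddU L M κ (autSetTup L M A (σ' ∘ u)) H (σ' ∘ d) :=
    (bddU_autSetTup_comp_iff hσ' u).2 hd
  have h : BddU L M κ (autSetTup L M A (σ ∘ u)) H (σ' ∘ d) :=
    ((bddU_autSetTup_comp_iff hσ u).2 hd).of_rel (H.equiv.symm hrel)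
  exact (bddU_autSet_comp_iff hσ').1 ((hind δ H _).1 ⟨h', h⟩)

theorem Homog.exists_mem_autSet_comp_eq (hhom : Homog L M κ) {B : Set M} {α : Type u}
    (hBα : #(B ⊕ α) < κ) {x y : α → M} (h : SameTypeOver L M B x y) :
    ∃ σ ∈ autSet L M B, ⇑σ ∘ x = y := by
  obtain ⟨σ, hσ⟩ := hhom _ _ _ hBα h
  exact ⟨σ, fun z hz => hσ (Sum.inl ⟨z, hz⟩), funext fun i => hσ (Sum.inr i)⟩

theorem strictMonoOn_card_filter_lt {ι : Type*} [LinearOrder ι] (F : Finset ι) :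
    StrictMonoOn (fun x => (F.filter (· < x)).card) F := by
  intro x hx y _ hxy
  refine Finset.card_lt_card ((Finset.ssubset_iff_of_subset ?_).2 ⟨x, ?_, ?_⟩)
  · exact Finset.monotone_filter_right F fun z _ hz => hz.trans hxy
  · simpa using ⟨hx, hxy⟩
  · simp

theorem realize_relabel_map_prodMap {B : Type*} {ι : Type*} {β : Type*} {n : ℕ}
    (φ : L.Formula (B ⊕ (Fin n × β))) (s : Fin n → ι) (a : B → M) (b : ι × β → M) :
    (φ.relabel (Sum.map id (Prod.map s id))).Realize (Sum.elim a b) ↔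
      φ.Realize (Sum.elim a (flatten M (Function.curry b) s)) := by
  rw [Language.Formula.realize_relabel]
  congr! 1
  funext q
  rcases q with _ | _ <;> rfl

theorem IndiscOver.exists_stretch (hsat : Saturated L M κ) {B : Set M} (hB : #B < κ)
    {β ι : Type u} [LinearOrder ι] (hιβ : #(ι × β) < κ) {b : ℕ → β → M}
    (hb : IndiscOver L M B b) :
    ∃ b' : ι → β → M, ∀ (n : ℕ) (s : Fin n → ι), StrictMono s →
      SameTypeOver L M B (flatten M b Fin.val) (flatten M b' s) := by
  classical
  let p : Set (L.Formula (B ⊕ (ι × β))) := {ψ | ∃ (n : ℕ) (s : Fin n → ι), StrictMono s ∧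
    ∃ φ : L.Formula (B ⊕ (Fin n × β)),
      φ.Realize (Sum.elim Subtype.val (flatten M b Fin.val)) ∧
        ψ = φ.relabel (Sum.map id (Prod.map s id))}
  have hfin : ∀ fs : Finset (L.Formula (B ⊕ (ι × β))), ↑fs ⊆ p →
      ∃ b' : ι × β → M, ∀ ψ ∈ fs, ψ.Realize (Sum.elim Subtype.val b') := by
    intro fs hfs
    choose n s hs φ hφ hrelabel using fun ψ : fs => hfs ψ.2
    let F := fs.attach.biUnion fun ψ => Finset.univ.image (s ψ)
    refine ⟨fun q => b (F.filter (· < q.1)).card q.2, fun ψ hψ => ?_⟩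
    rw [show ψ = _ from hrelabel ⟨ψ, hψ⟩, realize_relabel_map_prodMap]
    have hmem : ∀ k, s ⟨ψ, hψ⟩ k ∈ F := fun k =>
      Finset.mem_biUnion.2 ⟨_, Finset.mem_attach _ _, Finset.mem_image_of_mem _ (Finset.mem_univ k)⟩
    have hmono : StrictMono fun k => (F.filter (· < s ⟨ψ, hψ⟩ k)).card := fun k l hkl =>
      strictMonoOn_card_filter_lt F (hmem k) (hmem l) (hs _ hkl)
    exact (hb _ _ _ Fin.val_strictMono hmono _).1 (hφ _)
  obtain ⟨b', hb'⟩ := hsat _ _ hB hιβ Subtype.val p hfin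
  have himp : ∀ (n : ℕ) (s : Fin n → ι), StrictMono s → ∀ φ : L.Formula (B ⊕ (Fin n × β)),
      φ.Realize (Sum.elim Subtype.val (flatten M b Fin.val)) →
        φ.Realize (Sum.elim Subtype.val (flatten M (Function.curry b') s)) := fun n s hs φ hφ =>
    (realize_relabel_map_prodMap φ s _ b').1 (hb' _ ⟨n, s, hs, φ, hφ, rfl⟩)
  refine ⟨Function.curry b', fun n s hs φ => ⟨himp n s hs φ, fun h => ?_⟩⟩
  by_contra hn
  exact (himp n s hs φ.not hn) h

theorem IndiscOver.exists_stretch_conj (hmon : Monster L M κ) {B : Set M} (hB : #B < κ)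
    {β ι : Type u} [LinearOrder ι] (hβ : #β < κ) (hι : #ι < κ) {b : ℕ → β → M}
    (hb : IndiscOver L M B b) :
    ∃ b' : ι → β → M, ∀ (n : ℕ) (s : Fin n → ι), StrictMono s →
      ∃ τ ∈ autSet L M B, ∀ (k : Fin n) (x : β), τ (b k x) = b' (s k) x := by
  have hℵ := hmon.aleph0_lt.le
  obtain ⟨b', hb'⟩ :=
    hb.exists_stretch hmon.saturated hB (by simpa using Cardinal.mul_lt_of_lt hℵ hι hβ)
  refine ⟨b', fun n s hs => ?_⟩
  have hnβ : #(Fin n × β) < κ := by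
    simpa using Cardinal.mul_lt_of_lt hℵ (Cardinal.natCast_lt_aleph0.trans_le hℵ) hβ
  obtain ⟨τ, hτB, hτ⟩ := hmon.homog.exists_mem_autSet_comp_eq
    (by simpa using Cardinal.add_lt_of_lt hℵ hB hnβ) (hb' n s hs)
  exact ⟨τ, hτB, fun k x => congrFun hτ (k, x)⟩

end WeakChain

theorem statement_17_general (L : FirstOrder.Language.{u, u}) (M : Type u) [L.Structure M]
    (κbar : Cardinal.{u}) (_mon : Monster L M κbar)
    (A : Set M) (hA : #A < κbar) {β γ : Type u} (hβ : #β < κbar) (hγ : #γ < κbar)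
    (bi : ℕ → β → M) (c : γ → M)
    (hMor : ∀ i : ℕ, IndepBUReal L M κbar A (bi i) (fun p : Fin i × β => bi p.1 p.2))
    (hIndAc : IndiscOver L M (A ∪ Set.range c) bi) :
    IndepBUReal L M κbar A (bi 0) c := by
  have hB : #(A ∪ Set.range c : Set M) < κbar := (Cardinal.mk_union_le _ _).trans_lt
    (Cardinal.add_lt_of_lt _mon.aleph0_lt.le hA (Cardinal.mk_range_le.trans_lt hγ))
  intro δ H d
  refine ⟨fun ⟨hd₀, S, hS, hSd⟩ => ?_, fun hd => ⟨hd.mono_s17 fun _ h => h.1, hd.mono_s17 fun _ h => h.1⟩⟩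
  let ι := (Order.succ #S).ord.ToType
  have hι : #ι < κbar := by
    rw [Cardinal.mk_ord_toType]
    exact (Order.succ_le_of_lt (Cardinal.cantor _)).trans_lt (_mon.strongLimit _ hS)
  obtain ⟨b, hb⟩ := hIndAc.exists_stretch_conj _mon hB hβ hι
  choose σ hσB hσ using fun i : ι => hb 1 (fun _ => i) (Subsingleton.strictMono _)
  have hσA (i : ι) : σ i ∈ autSet L M A := autSet_anti Set.subset_union_left (hσB i)
  have hdc : BddU L M (Order.succ #S) (autSet L M (A ∪ Set.range c)) H d :=
    ⟨S, Order.lt_succ _, by rwa [autSetTup_eq_autSet_union_range] at hSd⟩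
  obtain ⟨i, j, hij, hrel⟩ := hdc.exists_lt_rel σ hσB (Cardinal.mk_ord_toType _).ge
  obtain ⟨τ, hτB, hτ⟩ := hb 2 ![i, j] (Fin.strictMono_iff_lt_succ.2 (by simpa using hij))
  have h10 : IndepBUReal L M κbar A (bi 1) (bi 0) := by
    have h := hMor 1
    rwa [IndepBUReal, show (fun p : Fin 1 × β => bi p.1 p.2) = bi 0 ∘ Prod.snd by
      funext p; rw [Fin.fin_one_eq_zero p.1]; rfl,
      autSetTup_comp_of_surjective Prod.snd_surjective] at h
  have hind : IndepBUReal L M κbar A (σ j ∘ bi 0) (σ i ∘ bi 0) := by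
    convert h10.comp_equiv (autSet_anti Set.subset_union_left hτB) using 1 <;> funext x
    · simpa using (hσ j 0 x).trans (hτ 1 x).symm
    · simpa using (hσ i 0 x).trans (hτ 0 x).symm
  exact bddU_of_rel_of_indepBUReal (hσA i) (hσA j) hind hd₀ hrel

/-- (Weak chain condition.) If `(b_i)_{i<ω}` is a `⫝ᵇᵘ`-Morley
sequence over `A` that is moreover `Ac`-indiscernible, then `b₀ ⫝ᵇᵘ_A c`. -/
theorem statement_17 (L : FirstOrder.Language.{u, u}) (M : Type u) [L.Structure M]
    (κbar : Cardinal.{u}) (_mon : Monster L M κbar)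
    (A : Set M) (hA : #A < κbar) {β γ : Type u} (hβ : #β < κbar) (hγ : #γ < κbar)
    (bi : ℕ → β → M) (c : γ → M)
    (hIndA : IndiscOver L M A bi)
    (hMor : ∀ i : ℕ, IndepBUReal L M κbar A (bi i) (fun p : Fin i × β => bi p.1 p.2))
    (hIndAc : IndiscOver L M (A ∪ Set.range c) bi) :
    IndepBUReal L M κbar A (bi 0) c :=
  statement_17_general L M κbar _mon A hA hβ hγ bi c hMor hIndAc

end BddUltra
end
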